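/- The constant function 1 belongs to the local BMO-type space bmo^Φ(ℝⁿ) with ‖1‖_{bmo^Φ} = log(1+e), but 1 does not belong to bmo^{log}(ℝⁿ). Consequently bmo^{log}(ℝⁿ) ⊊ bmo^Φ(ℝⁿ) (assuming the inclusion bmo^{log} ⊂ bmo^Φ). -/

import Mathlib

/-! A constant `c` equals its average over every cube, so all oscillation terms vanish, while the
global term of bmo^Φ over a cube of side `ℓ ≥ 1` is `|c| log (e + ℓ⁻ⁿ)`, largest at `ℓ = 1`.
The bmo^{log} weight also contains `sup_Q log (e + |x|)`, which is unbounded along unit cubes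
escaping to infinity, so the global part of the bmo^{log} norm of `c ≠ 0` is infinite. -/

open MeasureTheory

/-- The axis-parallel closed cube with lower corner `a` and side length `ℓ`. -/
def cube {n : ℕ} (a : Fin n → ℝ) (ℓ : ℝ) : Set (EuclideanSpace ℝ (Fin n)) :=
  {x | ∀ i, a i ≤ x i ∧ x i ≤ a i + ℓ}

/-- The average of `f` over a set `Q`. -/
noncomputable def cubeAvg {n : ℕ} (f : EuclideanSpace ℝ (Fin n) → ℝ)
    (Q : Set (EuclideanSpace ℝ (Fin n))) : ℝ :=
  ((volume Q).toReal)⁻¹ * ∫ x in Q, f x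

/-- Values of the oscillation part (ℓ(Q) < 1) of the bmo^Φ norm of `f`. -/
def SPhiOsc {n : ℕ} (f : EuclideanSpace ℝ (Fin n) → ℝ) : Set ℝ :=
  {v | ∃ (a : Fin n → ℝ) (ℓ : ℝ), 0 < ℓ ∧ ℓ < 1 ∧
    v = Real.log (Real.exp 1 + ((volume (cube a ℓ)).toReal)⁻¹) /
        (volume (cube a ℓ)).toReal *
      ∫ x in cube a ℓ, |f x - cubeAvg f (cube a ℓ)|}

/-- Values of the global part (ℓ(Q) ≥ 1) of the bmo^Φ norm of `f`. -/
def SPhiGlob {n : ℕ} (f : EuclideanSpace ℝ (Fin n) → ℝ) : Set ℝ :=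
  {v | ∃ (a : Fin n → ℝ) (ℓ : ℝ), 1 ≤ ℓ ∧
    v = Real.log (Real.exp 1 + ((volume (cube a ℓ)).toReal)⁻¹) /
        (volume (cube a ℓ)).toReal *
      ∫ x in cube a ℓ, |f x|}

/-- Values of the oscillation part (ℓ(Q) < 1) of the bmo^{log} norm of `f`. -/
noncomputable def SLogOsc {n : ℕ} (f : EuclideanSpace ℝ (Fin n) → ℝ) : Set ℝ :=
  {v | ∃ (a : Fin n → ℝ) (ℓ : ℝ), 0 < ℓ ∧ ℓ < 1 ∧
    v = (Real.log (Real.exp 1 + ((volume (cube a ℓ)).toReal)⁻¹) +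
          sSup ((fun x : EuclideanSpace ℝ (Fin n) =>
            Real.log (Real.exp 1 + ‖x‖)) '' cube a ℓ)) /
        (volume (cube a ℓ)).toReal *
      ∫ x in cube a ℓ, |f x - cubeAvg f (cube a ℓ)|}

/-- Values of the global part (ℓ(Q) ≥ 1) of the bmo^{log} norm of `f`. -/
noncomputable def SLogGlob {n : ℕ} (f : EuclideanSpace ℝ (Fin n) → ℝ) : Set ℝ :=
  {v | ∃ (a : Fin n → ℝ) (ℓ : ℝ), 1 ≤ ℓ ∧
    v = (Real.log (Real.exp 1 + ((volume (cube a ℓ)).toReal)⁻¹) +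
          sSup ((fun x : EuclideanSpace ℝ (Fin n) =>
            Real.log (Real.exp 1 + ‖x‖)) '' cube a ℓ)) /
        (volume (cube a ℓ)).toReal *
      ∫ x in cube a ℓ, |f x|}

/-- Membership in bmo^Φ(ℝⁿ): both suprema in the norm are finite. -/
def memBmoPhi {n : ℕ} (f : EuclideanSpace ℝ (Fin n) → ℝ) : Prop :=
  BddAbove (SPhiOsc f) ∧ BddAbove (SPhiGlob f)

/-- Membership in bmo^{log}(ℝⁿ): both suprema in the norm are finite. -/
def memBmoLog {n : ℕ} (f : EuclideanSpace ℝ (Fin n) → ℝ) : Prop :=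
  BddAbove (SLogOsc f) ∧ BddAbove (SLogGlob f)

open Real Set

section Cube

variable {n : ℕ}

lemma cube_eq_preimage_ofLp (a : Fin n → ℝ) (ℓ : ℝ) :
    cube a ℓ = WithLp.ofLp ⁻¹' univ.pi fun i ↦ Icc (a i) (a i + ℓ) := by
  ext x
  simp only [cube, mem_ofPred_eq, mem_preimage, mem_univ_pi, mem_Icc]

lemma volume_cube (a : Fin n → ℝ) {ℓ : ℝ} (hℓ : 0 ≤ ℓ) :
    (volume (cube a ℓ)).toReal = ℓ ^ n := by
  rw [cube_eq_preimage_ofLp, (PiLp.volume_preserving_ofLp (Fin n)).measure_preimage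
    (MeasurableSet.univ_pi fun _ => measurableSet_Icc).nullMeasurableSet, volume_pi_pi]
  simp [Real.volume_Icc, ENNReal.toReal_ofReal hℓ]

lemma isCompact_cube (a : Fin n → ℝ) (ℓ : ℝ) : IsCompact (cube a ℓ) := by
  rw [cube_eq_preimage_ofLp]
  exact (PiLp.homeomorph 2 _).isCompact_preimage.2 (isCompact_univ_pi fun _ => isCompact_Icc)

lemma toLp_mem_cube (a : Fin n → ℝ) {ℓ : ℝ} (hℓ : 0 ≤ ℓ) : WithLp.toLp 2 a ∈ cube a ℓ :=
  fun _ => ⟨le_rfl, le_add_of_nonneg_right hℓ⟩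

lemma setIntegral_const_cube (a : Fin n → ℝ) {ℓ : ℝ} (hℓ : 0 ≤ ℓ) (c : ℝ) :
    ∫ _ in cube a ℓ, c = ℓ ^ n * c := by
  rw [setIntegral_const, measureReal_def, volume_cube a hℓ, smul_eq_mul]

lemma cubeAvg_const (a : Fin n → ℝ) {ℓ : ℝ} (hℓ : 0 < ℓ) (c : ℝ) :
    cubeAvg (fun _ => c) (cube a ℓ) = c := by
  rw [cubeAvg, setIntegral_const_cube a hℓ.le, volume_cube a hℓ.le]
  field_simp

lemma log_add_norm_le_sSup_cube {a : Fin n → ℝ} {ℓ : ℝ} {x : EuclideanSpace ℝ (Fin n)}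
    (hx : x ∈ cube a ℓ) :
    log (exp 1 + ‖x‖) ≤
      sSup ((fun x : EuclideanSpace ℝ (Fin n) => log (exp 1 + ‖x‖)) '' cube a ℓ) := by
  have hcont : Continuous fun x : EuclideanSpace ℝ (Fin n) => exp 1 + ‖x‖ := by fun_prop
  exact le_csSup ((isCompact_cube a ℓ).bddAbove_image
    (hcont.continuousOn.log fun x _ => by positivity)) (mem_image_of_mem _ hx)

end Cube

section Const

variable {n : ℕ}

lemma SPhiOsc_const (c : ℝ) : SPhiOsc (fun _ : EuclideanSpace ℝ (Fin n) => c) = {0} := by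
  ext v
  constructor
  · rintro ⟨a, ℓ, hℓ, -, rfl⟩
    simp [cubeAvg_const a hℓ]
  · rintro rfl
    have hℓ : (0 : ℝ) < 2⁻¹ := by norm_num
    exact ⟨0, 2⁻¹, hℓ, by norm_num, by simp [cubeAvg_const 0 hℓ]⟩

lemma isGreatest_SPhiGlob_const (c : ℝ) :
    IsGreatest (SPhiGlob (fun _ : EuclideanSpace ℝ (Fin n) => c)) (log (exp 1 + 1) * |c|) := by
  have value : ∀ (a : Fin n → ℝ) {ℓ : ℝ}, 1 ≤ ℓ →
      log (exp 1 + ((volume (cube a ℓ)).toReal)⁻¹) / (volume (cube a ℓ)).toReal *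
        ∫ _ in cube a ℓ, |c| = log (exp 1 + (ℓ ^ n)⁻¹) * |c| := by
    intro a ℓ hℓ
    have : ℓ ^ n ≠ 0 := by positivity
    rw [volume_cube a (by linarith), setIntegral_const_cube a (by linarith)]
    field_simp
  refine ⟨⟨0, 1, le_rfl, by rw [value 0 le_rfl, one_pow, inv_one]⟩, ?_⟩
  rintro v ⟨a, ℓ, hℓ, rfl⟩
  rw [value a hℓ]
  gcongr
  exact inv_le_one_of_one_le₀ (one_le_pow₀ hℓ)

lemma memBmoPhi_const (c : ℝ) : memBmoPhi (fun _ : EuclideanSpace ℝ (Fin n) => c) :=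
  ⟨SPhiOsc_const c ▸ bddAbove_singleton, (isGreatest_SPhiGlob_const c).bddAbove⟩

lemma sSup_SPhiOsc_add_sSup_SPhiGlob_const (c : ℝ) :
    sSup (SPhiOsc (fun _ : EuclideanSpace ℝ (Fin n) => c)) +
      sSup (SPhiGlob (fun _ : EuclideanSpace ℝ (Fin n) => c)) = log (exp 1 + 1) * |c| := by
  rw [SPhiOsc_const, csSup_singleton, (isGreatest_SPhiGlob_const c).csSup_eq, zero_add]

lemma not_bddAbove_SLogGlob_const (hn : 0 < n) {c : ℝ} (hc : c ≠ 0) :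
    ¬ BddAbove (SLogGlob (fun _ : EuclideanSpace ℝ (Fin n) => c)) := by
  rintro ⟨M, hM⟩
  set R := exp (M / |c|)
  let a : Fin n → ℝ := fun _ => R
  have hS : log (exp 1 + R) ≤
      sSup ((fun x : EuclideanSpace ℝ (Fin n) => log (exp 1 + ‖x‖)) '' cube a 1) := by
    refine le_trans ?_ (log_add_norm_le_sSup_cube (toLp_mem_cube a zero_le_one))
    gcongr
    calc R = ‖WithLp.toLp 2 a ⟨0, hn⟩‖ := by simp [a, R]
      _ ≤ _ := PiLp.norm_apply_le _ _
  have hvalue := hM ⟨a, 1, le_rfl, rfl⟩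
  rw [volume_cube a zero_le_one, setIntegral_const_cube a zero_le_one, one_pow, div_one,
    one_mul, inv_one] at hvalue
  have hR : M / |c| < log (exp 1 + R) := by
    rw [← log_exp (M / |c|)]
    exact log_lt_log (exp_pos _) (by linarith [exp_pos 1])
  rw [div_lt_iff₀ (abs_pos.2 hc)] at hR
  have : 0 ≤ log (exp 1 + 1) := log_nonneg (by linarith [add_one_le_exp 1])
  nlinarith [abs_pos.2 hc]

lemma not_memBmoLog_const (hn : 0 < n) {c : ℝ} (hc : c ≠ 0) :
    ¬ memBmoLog (fun _ : EuclideanSpace ℝ (Fin n) => c) :=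
  fun h => not_bddAbove_SLogGlob_const hn hc h.2

end Const

/-- The constant function 1 belongs to bmo^Φ(ℝⁿ) with ‖1‖_{bmo^Φ} = log(1+e), but
1 ∉ bmo^{log}(ℝⁿ); consequently, if bmo^{log} ⊂ bmo^Φ then the inclusion is strict. -/
theorem one_mem_bmoPhi_not_bmoLog (n : ℕ) (hn : 0 < n) :
    memBmoPhi (fun _ : EuclideanSpace ℝ (Fin n) => (1:ℝ)) ∧
    sSup (SPhiOsc (fun _ : EuclideanSpace ℝ (Fin n) => (1:ℝ))) +
      sSup (SPhiGlob (fun _ : EuclideanSpace ℝ (Fin n) => (1:ℝ))) =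
        Real.log (1 + Real.exp 1) ∧
    ¬ memBmoLog (fun _ : EuclideanSpace ℝ (Fin n) => (1:ℝ)) ∧
    ((∀ f : EuclideanSpace ℝ (Fin n) → ℝ, memBmoLog f → memBmoPhi f) →
      {f : EuclideanSpace ℝ (Fin n) → ℝ | memBmoLog f} ⊂
        {f : EuclideanSpace ℝ (Fin n) → ℝ | memBmoPhi f}) := by
  have hPhi := memBmoPhi_const (n := n) 1
  have hNotLog := not_memBmoLog_const hn one_ne_zero
  refine ⟨hPhi, ?_, hNotLog, fun hincl => ⟨hincl, fun hsub => hNotLog (hsub hPhi)⟩⟩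
  rw [sSup_SPhiOsc_add_sSup_SPhiGlob_const, abs_one, mul_one, add_comm]
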